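/- For all integers n ≥ 1 and q ≥ 2, the q-liminf density of the (n+1)-st Zimin word satisfies underlineδ(Z_{n+1}, q) ≥ 1 / ((f(n,q) − 2^n + 2)² · q^{f(n,q)+1}). -/

import Mathlib

open Filter

/-- `U` is an instance of `V`: image of `V` under a nonerasing substitution. -/
def IsInstance {Γ β : Type*} (V : List Γ) (U : List β) : Prop :=
  ∃ φ : Γ → List β, (∀ x ∈ V, φ x ≠ []) ∧ U = (V.map φ).flatten

/-- `W` encounters `V`: some factor of `W` is an instance of `V`. -/
def Encounters {Γ β : Type*} (V : List Γ) (W : List β) : Prop :=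
  ∃ U : List β, U <:+: W ∧ IsInstance V U

/-- Zimin words over alphabet ℕ. -/
def Zimin : ℕ → List ℕ
  | 0 => []
  | n + 1 => Zimin n ++ [n] ++ Zimin n

/-- Least M such that every q-ary word of length M encounters Z_n. -/
noncomputable def fZ (n q : ℕ) : ℕ :=
  sInf {M | ∀ W : List (Fin q), W.length = M → Encounters (Zimin n) W}

/-- Exponential tower with b copies of a. -/
def tower (a : ℕ) : ℕ → ℕ
  | 0 => 1
  | b + 1 => a ^ tower a b

/-- Number of length-M q-ary words that are instances of V. -/
noncomputable def instCount (V : List ℕ) (q M : ℕ) : ℕ :=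
  Nat.card {W : Fin M → Fin q // IsInstance V (List.ofFn W)}

/-- Factor density d(V,W). -/
noncomputable def factorDensity {α : Type*} [DecidableEq α] (V W : List α) : ℝ :=
  (((((Finset.range (W.length + 1)) ×ˢ (Finset.range (W.length + 1))).filter
      (fun p => p.1 < p.2 ∧ (W.drop p.1).take (p.2 - p.1) = V)).card : ℝ)) /
    ((W.length : ℝ) + 1 - (V.length : ℝ))

/-- Number of substrings of W (given by position pairs) that are V-instances. -/
noncomputable def instSubCount {Γ β : Type*} (V : List Γ) (W : List β) : ℕ :=
  Nat.card {p : ℕ × ℕ //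
    p.1 < p.2 ∧ p.2 ≤ W.length ∧ IsInstance V ((W.drop p.1).take (p.2 - p.1))}

/-- Instance density δ(V,W). -/
noncomputable def instDensity {Γ β : Type*} (V : List Γ) (W : List β) : ℝ :=
  (instSubCount V W : ℝ) / ((W.length + 1).choose 2 : ℝ)

/-- q-liminf density of V. -/
noncomputable def liminfDensity {Γ : Type*} (V : List Γ) (q : ℕ) : ℝ :=
  Filter.liminf (fun W : List (Fin q) => instDensity V W) (Filter.comap List.length Filter.atTop)

/-- Expected instance density of V in a uniformly random q-ary word of length n. -/
noncomputable def expDensity {Γ : Type*} (V : List Γ) (q n : ℕ) : ℝ :=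
  (∑ W : Fin n → Fin q, instDensity V (List.ofFn W)) / (q : ℝ) ^ n

/-- Variance of the instance density of V in a uniformly random q-ary word of length n. -/
noncomputable def varDensity {Γ : Type*} (V : List Γ) (q n : ℕ) : ℝ :=
  (∑ W : Fin n → Fin q, (instDensity V (List.ofFn W) - expDensity V q n) ^ 2) / (q : ℝ) ^ n

/-- Probability that a uniformly random q-ary word of length n is a V-instance. -/
noncomputable def instProb {Γ : Type*} (V : List Γ) (q n : ℕ) : ℝ :=
  (Nat.card {W : Fin n → Fin q // IsInstance V (List.ofFn W)} : ℝ) / (q : ℝ) ^ n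

/-- V is doubled: every letter occurring in V occurs at least twice. -/
def Doubled {Γ : Type*} [DecidableEq Γ] (V : List Γ) : Prop :=
  ∀ x ∈ V, 2 ≤ V.count x

/-- Number of letter recurrences ‖V‖ = |V| - |L(V)|. -/
def recurCount {Γ : Type*} [DecidableEq Γ] (V : List Γ) : ℕ :=
  V.length - V.dedup.length

/-!
Put `f = f(n,q)` and `s = f - 2^n + 2`. Every window of length `f` of a long word `W` contains an
instance of `Z n`, which has length at least `2^n - 1`; hence at least `(|W| - f + 1) / s`
positions of `W` start an instance of `Z n` of length at most `f`. These short instances are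
fewer than `q^(f+1)` distinct words, so by Cauchy–Schwarz about `|W|² / (s² q^(f+1))` pairs of
starts carry the same word. All but `O(f |W|)` of these pairs are separated by a nonempty gap,
and then `U ⋯ U` is an instance of `Z (n+1)`. The same count, applied to long words without an
instance of `Z (n+1)`, shows that `f(n,q)` exists.
-/

namespace List

variable {α : Type*}

/-- `W.factor i j` is the factor `W[i,j]` of the paper: the letters at positions `i, …, j - 1`. -/
def factor (W : List α) (i j : ℕ) : List α := (W.drop i).take (j - i)

variable (W : List α) {i j k : ℕ}

theorem length_factor (hij : i ≤ j) (hj : j ≤ W.length) : (W.factor i j).length = j - i := by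
  simp only [factor, length_take, length_drop]
  omega

theorem length_factor_le : (W.factor i j).length ≤ j - i := by
  simp only [factor, length_take]
  omega

theorem factor_append_factor (hij : i ≤ j) (hjk : j ≤ k) :
    W.factor i j ++ W.factor j k = W.factor i k := by
  rw [factor, factor, factor, show k - i = (j - i) + (k - j) by omega, take_add, drop_drop,
    Nat.add_sub_cancel' hij]

theorem factor_infix : W.factor i j <:+: W :=
  (take_prefix _ _).isInfix.trans (drop_suffix i W).isInfix

theorem factor_factor {a b : ℕ} (hb : b ≤ j - i) :
    (W.factor i j).factor a b = W.factor (i + a) (i + b) := by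
  simp only [factor, drop_take, drop_drop, take_take]
  congr 1
  omega

theorem IsInfix.exists_eq_factor {U : List α} (h : U <:+: W) :
    ∃ i, i + U.length ≤ W.length ∧ U = W.factor i (i + U.length) := by
  obtain ⟨s, t, rfl⟩ := h
  refine ⟨s.length, by simp, ?_⟩
  simp [factor]

end List

open List

section Instances

variable {Γ β : Type*}

theorem IsInstance.length_le {V : List Γ} {U : List β} (h : IsInstance V U) :
    V.length ≤ U.length := by
  obtain ⟨φ, hφ, rfl⟩ := h
  simpa using length_le_sum_of_one_le ((V.map φ).map length) (by
    simpa [Nat.one_le_iff_ne_zero] using hφ)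

theorem Encounters.length_le {V : List Γ} {W : List β} (h : Encounters V W) :
    V.length ≤ W.length :=
  let ⟨_, hU, hV⟩ := h
  hV.length_le.trans hU.length_le

theorem Encounters.exists_factor {V : List Γ} {W : List β} {i j : ℕ}
    (h : Encounters V (W.factor i j)) (hij : i ≤ j) :
    ∃ a b, i ≤ a ∧ a ≤ b ∧ b ≤ j ∧ IsInstance V (W.factor a b) := by
  obtain ⟨U, hU, hV⟩ := h
  obtain ⟨p, hp, hUp⟩ := hU.exists_eq_factor
  have hpj : p + U.length ≤ j - i := hp.trans (W.length_factor_le)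
  rw [hUp, W.factor_factor hpj] at hV
  exact ⟨i + p, i + (p + U.length), by omega, by omega, by omega, hV⟩

end Instances

theorem length_zimin (n : ℕ) : (Zimin n).length = 2 ^ n - 1 := by
  induction n with
  | zero => rfl
  | succ n ih =>
    simp only [Zimin, length_append, ih, length_singleton, pow_succ]
    have := Nat.one_le_two_pow (n := n)
    omega

theorem lt_of_mem_zimin {n x : ℕ} (hx : x ∈ Zimin n) : x < n := by
  induction n with
  | zero => simp [Zimin] at hx
  | succ n ih =>
    simp only [Zimin, mem_append, mem_singleton] at hx
    rcases hx with (hx | rfl) | hx <;> grind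

theorem IsInstance.zimin_succ {β : Type*} {n : ℕ} {U Mid : List β}
    (hU : IsInstance (Zimin n) U) (hMid : Mid ≠ []) :
    IsInstance (Zimin (n + 1)) (U ++ Mid ++ U) := by
  obtain ⟨φ, hφ, rfl⟩ := hU
  refine ⟨fun x => if x = n then Mid else φ x, fun x hx => ?_, ?_⟩
  · simp only [Zimin, mem_append, mem_singleton] at hx
    dsimp only
    split_ifs
    · exact hMid
    · exact hφ x (by tauto)
  · have : (Zimin n).map (fun x => if x = n then Mid else φ x) = (Zimin n).map φ :=
      map_congr_left fun x hx => if_neg (lt_of_mem_zimin hx).ne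
    simp [Zimin, this]

theorem isInstance_zimin_succ_factor {β : Type*} {n : ℕ} {W : List β} {a e b e' : ℕ}
    (hae : a ≤ e) (heb : e < b) (hbe' : b ≤ e') (he' : e' ≤ W.length)
    (h : IsInstance (Zimin n) (W.factor a e)) (heq : W.factor b e' = W.factor a e) :
    IsInstance (Zimin (n + 1)) (W.factor a e') := by
  rw [← W.factor_append_factor hae (by omega), ← W.factor_append_factor heb.le hbe', heq,
    ← append_assoc]
  refine h.zimin_succ (ne_nil_of_length_pos ?_)
  rw [W.length_factor heb.le (by omega)]
  omega

section InstPairs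

variable {Γ β : Type*} (V : List Γ) (W : List β)

def instPairs : Set (ℕ × ℕ) :=
  {p | p.1 < p.2 ∧ p.2 ≤ W.length ∧ IsInstance V (W.factor p.1 p.2)}

theorem instSubCount_eq_ncard : instSubCount V W = (instPairs V W).ncard :=
  Nat.card_coe_set_eq (instPairs V W)

theorem instPairs_subset :
    instPairs V W ⊆ ↑(Finset.range (W.length + 1) ×ˢ Finset.range (W.length + 1)) := by
  rintro p ⟨h12, h2, -⟩
  simp only [Finset.coe_product, Set.mem_prod, Finset.coe_range, Set.mem_Iio]
  omega

theorem instSubCount_le_sq : instSubCount V W ≤ (W.length + 1) ^ 2 := by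
  rw [instSubCount_eq_ncard, sq, ← Finset.card_range (W.length + 1), ← Finset.card_product,
    ← Set.ncard_coe_finset]
  exact Set.ncard_le_ncard (instPairs_subset V W) (Finset.finite_toSet _)

theorem card_le_instSubCount {P : Finset (ℕ × ℕ)} {g : ℕ × ℕ → ℕ × ℕ}
    (hg : ∀ p ∈ P, g p ∈ instPairs V W) (hinj : Set.InjOn g P) :
    P.card ≤ instSubCount V W := by
  rw [instSubCount_eq_ncard, ← Set.ncard_coe_finset]
  exact Set.ncard_le_ncard_of_injOn g hg hinj
    ((Finset.finite_toSet _).subset (instPairs_subset V W))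

theorem encounters_of_instSubCount_ne_zero (h : instSubCount V W ≠ 0) : Encounters V W := by
  rw [instSubCount_eq_ncard] at h
  obtain ⟨p, -, -, hp⟩ := Set.nonempty_of_ncard_ne_zero h
  exact ⟨_, W.factor_infix, hp⟩

theorem instDensity_eq :
    instDensity V W = 2 * instSubCount V W / (W.length * (W.length + 1)) := by
  rw [instDensity, Nat.cast_choose_two, div_div_eq_mul_div]
  push_cast
  ring

theorem instDensity_le_four (hW : 1 ≤ W.length) : instDensity V W ≤ 4 := by
  have hL : (1 : ℝ) ≤ W.length := by exact_mod_cast hW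
  have hC : (instSubCount V W : ℝ) ≤ (W.length + 1) ^ 2 := by
    exact_mod_cast instSubCount_le_sq V W
  rw [instDensity_eq, div_le_iff₀ (by positivity)]
  nlinarith

end InstPairs

namespace Finset

theorem sq_card_le_card_image_mul_card_filter_eq {ι κ : Type*} [DecidableEq κ] (s : Finset ι)
    (g : ι → κ) :
    s.card ^ 2 ≤ (s.image g).card * ((s ×ˢ s).filter fun p => g p.1 = g p.2).card := by
  classical
  have hpairs : ((s ×ˢ s).filter fun p => g p.1 = g p.2).card =
      ∑ u ∈ s.image g, (s.filter (g · = u)).card ^ 2 := by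
    rw [card_eq_sum_card_fiberwise (f := fun p => g p.1) (t := s.image g)]
    · refine sum_congr rfl fun u _ => ?_
      rw [sq, ← card_product]
      congr 1
      ext p
      simp only [mem_filter, mem_product]
      grind
    · exact fun p hp => mem_image_of_mem g (mem_product.1 (mem_filter.1 hp).1).1
  rw [hpairs, card_eq_sum_card_image g s]
  exact sq_sum_le_card_mul_sum_sq

theorem card_filter_eq_le_mul_add_card_filter_lt {κ : Type*} [DecidableEq κ] (S : Finset ℕ)
    (w : ℕ → κ) (E : ℕ → ℕ) {M : ℕ} (hE : ∀ a ∈ S, E a ≤ a + M) :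
    ((S ×ˢ S).filter fun p => w p.1 = w p.2).card ≤
      (2 * M + 1) * S.card +
        2 * ((S ×ˢ S).filter fun p => w p.1 = w p.2 ∧ E p.1 < p.2).card := by
  set P := (S ×ˢ S).filter fun p => w p.1 = w p.2 ∧ E p.1 < p.2
  set Near := S.biUnion fun a => (Icc (a - M) (a + M)).image (a, ·)
  have hcover :
      ((S ×ˢ S).filter fun p => w p.1 = w p.2) ⊆ Near ∪ (P ∪ P.image Prod.swap) := by
    rintro ⟨a, b⟩ hab
    simp only [mem_filter, mem_product] at hab
    obtain ⟨⟨ha, hb⟩, hw⟩ := hab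
    simp only [P, Near, mem_union, mem_biUnion, mem_image, mem_filter, mem_product, mem_Icc,
      Prod.exists, Prod.swap_prod_mk, Prod.mk.injEq]
    have := hE a ha
    have := hE b hb
    by_cases hab : E a < b
    · exact Or.inr (Or.inl ⟨⟨ha, hb⟩, hw, hab⟩)
    by_cases hba : E b < a
    · exact Or.inr (Or.inr ⟨b, a, ⟨⟨hb, ha⟩, hw.symm, hba⟩, rfl, rfl⟩)
    exact Or.inl ⟨a, ha, b, by omega, rfl, rfl⟩
  have hNear : Near.card ≤ S.card * (2 * M + 1) :=
    card_biUnion_le_card_mul _ _ _ fun a _ => card_image_le.trans (by rw [Nat.card_Icc]; omega)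
  calc _ ≤ (Near ∪ (P ∪ P.image Prod.swap)).card := card_le_card hcover
    _ ≤ Near.card + (P.card + (P.image Prod.swap).card) :=
      (card_union_le _ _).trans (Nat.add_le_add_left (card_union_le _ _) _)
    _ ≤ S.card * (2 * M + 1) + (P.card + P.card) := by grw [hNear, card_image_le]
    _ = _ := by ring

theorem card_le_sum_pow_of_length_le {α : Type*} [Fintype α] {K : Finset (List α)} {M : ℕ}
    (hK : ∀ u ∈ K, u.length ≤ M) :
    K.card ≤ ∑ l ∈ range (M + 1), Fintype.card α ^ l := by
  classical
  let words (l : ℕ) : Finset (List α) := univ.image (List.Vector.toList : List.Vector α l → _)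
  calc K.card ≤ ((range (M + 1)).biUnion words).card :=
        card_le_card fun u hu => mem_biUnion.2
          ⟨u.length, mem_range.2 (Nat.lt_succ_of_le (hK u hu)),
            mem_image.2 ⟨⟨u, rfl⟩, mem_univ _, rfl⟩⟩
    _ ≤ ∑ l ∈ range (M + 1), (words l).card := card_biUnion_le
    _ ≤ _ := sum_le_sum fun l _ => card_image_le.trans (by rw [card_univ, card_vector])

end Finset

section Counting

variable {α : Type*} {n M : ℕ} {W : List α}

open Classical in
noncomputable def ziminStarts (n M : ℕ) (W : List α) : Finset ℕ :=
  (Finset.range (W.length + 1)).filter fun a =>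
    ∃ b, a ≤ b ∧ b ≤ a + M ∧ b ≤ W.length ∧ IsInstance (Zimin n) (W.factor a b)

theorem card_ziminStarts_le : (ziminStarts n M W).card ≤ W.length + 1 := by
  classical
  exact (Finset.card_filter_le _ _).trans (Finset.card_range _).le

theorem le_mul_card_ziminStarts (hM : ∀ U : List α, U.length = M → Encounters (Zimin n) U)
    (hML : M ≤ W.length) :
    W.length - M + 1 ≤ (M + 2 - 2 ^ n) * (ziminStarts n M W).card := by
  classical
  have hcover : Finset.range (W.length - M + 1) ⊆
      (ziminStarts n M W).biUnion fun a => Finset.Icc (a + 2 ^ n - 1 - M) a := by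
    intro i hi
    rw [Finset.mem_range] at hi
    -- the window `W[i, i + M]` yields a start `a ∈ [i, i + M + 1 - 2^n]`
    have hwindow := hM (W.factor i (i + M)) (by rw [W.length_factor (by omega) (by omega)]; omega)
    obtain ⟨a, b, hia, hab, hbi, hinst⟩ := hwindow.exists_factor (by omega)
    have hlen := hinst.length_le
    rw [length_zimin, W.length_factor hab (by omega)] at hlen
    refine Finset.mem_biUnion.2 ⟨a, ?_, Finset.mem_Icc.2 ⟨by omega, hia⟩⟩
    exact Finset.mem_filter.2 ⟨Finset.mem_range.2 (by omega), b, hab, by omega, by omega, hinst⟩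
  calc W.length - M + 1 = (Finset.range (W.length - M + 1)).card := (Finset.card_range _).symm
    _ ≤ _ := Finset.card_le_card hcover
    _ ≤ (ziminStarts n M W).card * (M + 2 - 2 ^ n) :=
      Finset.card_biUnion_le_card_mul _ _ _ fun a _ => by rw [Nat.card_Icc]; omega
    _ = _ := Nat.mul_comm _ _

theorem sq_card_ziminStarts_le [Fintype α] :
    (ziminStarts n M W).card ^ 2 ≤ (∑ l ∈ Finset.range (M + 1), Fintype.card α ^ l) *
      ((2 * M + 1) * (ziminStarts n M W).card + 2 * instSubCount (Zimin (n + 1)) W) := by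
  classical
  set S := ziminStarts n M W
  choose! E hE using fun a (ha : a ∈ S) => (Finset.mem_filter.1 ha).2
  set w : ℕ → List α := fun a => W.factor a (E a)
  set P := (S ×ˢ S).filter fun p => w p.1 = w p.2 ∧ E p.1 < p.2
  have hwords : (S.image w).card ≤ ∑ l ∈ Finset.range (M + 1), Fintype.card α ^ l := by
    refine Finset.card_le_sum_pow_of_length_le fun u hu => ?_
    obtain ⟨a, ha, rfl⟩ := Finset.mem_image.1 hu
    have : (w a).length ≤ E a - a := W.length_factor_le
    have := hE a ha
    omega
  have hlen : ∀ a ∈ S, (w a).length = E a - a := fun a ha =>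
    W.length_factor (hE a ha).1 (hE a ha).2.2.1
  have hP : P.card ≤ instSubCount (Zimin (n + 1)) W := by
    refine card_le_instSubCount _ _ (g := fun p => (p.1, E p.2)) ?_ ?_
    · rintro ⟨a, b⟩ hp
      simp only [P, Finset.mem_filter, Finset.mem_product] at hp
      obtain ⟨⟨ha, hb⟩, hw, hab⟩ := hp
      have := hE a ha
      obtain ⟨hb1, -, hb3, -⟩ := hE b hb
      exact ⟨show a < E b by omega, hb3,
        isInstance_zimin_succ_factor this.1 hab hb1 hb3 this.2.2.2 hw.symm⟩
    -- equal words have equal lengths, so `E b` determines `b`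
    · rintro ⟨a, b⟩ hp ⟨a', b'⟩ hp' h
      simp only [P, Finset.mem_coe, Finset.mem_filter, Finset.mem_product] at hp hp'
      simp only [Prod.mk.injEq] at h ⊢
      obtain ⟨rfl, hE'⟩ := h
      have := hlen b hp.1.2
      have := hlen b' hp'.1.2
      have := (hE b hp.1.2).1
      have := (hE b' hp'.1.2).1
      have : (w b).length = (w b').length := by rw [← hp.2.1, hp'.2.1]
      omega
  calc S.card ^ 2 ≤ (S.image w).card * ((S ×ˢ S).filter fun p => w p.1 = w p.2).card :=
        Finset.sq_card_le_card_image_mul_card_filter_eq S w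
    _ ≤ _ * ((2 * M + 1) * S.card + 2 * P.card) := by
        gcongr
        exact Finset.card_filter_eq_le_mul_add_card_filter_lt S w E fun a ha => (hE a ha).2.1
    _ ≤ _ := by gcongr

theorem sq_le_of_forall_encounters_zimin [Fintype α]
    (hM : ∀ U : List α, U.length = M → Encounters (Zimin n) U) (hML : M ≤ W.length) :
    (W.length - M + 1) ^ 2 ≤
      (M + 2 - 2 ^ n) ^ 2 * (∑ l ∈ Finset.range (M + 1), Fintype.card α ^ l) *
        ((2 * M + 1) * (W.length + 1) + 2 * instSubCount (Zimin (n + 1)) W) := by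
  calc (W.length - M + 1) ^ 2 ≤ ((M + 2 - 2 ^ n) * (ziminStarts n M W).card) ^ 2 := by
        gcongr
        exact le_mul_card_ziminStarts hM hML
    _ = (M + 2 - 2 ^ n) ^ 2 * (ziminStarts n M W).card ^ 2 := mul_pow ..
    _ ≤ _ := by
        rw [mul_assoc]
        grw [sq_card_ziminStarts_le, card_ziminStarts_le]

end Counting

theorem exists_forall_encounters_zimin (α : Type*) [Fintype α] (n : ℕ) :
    ∃ M, ∀ W : List α, W.length = M → Encounters (Zimin n) W := by
  induction n with
  | zero => exact ⟨0, fun W _ => ⟨[], nil_infix, fun _ => [], by simp [Zimin], rfl⟩⟩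
  | succ n ih =>
    obtain ⟨M, hM⟩ := ih
    set c :=
      (M + 2 - 2 ^ n) ^ 2 * (∑ l ∈ Finset.range (M + 1), Fintype.card α ^ l) * (2 * M + 1)
    refine ⟨c + 2 * M, fun W hW => ?_⟩
    by_contra hW'
    have hC : instSubCount (Zimin (n + 1)) W = 0 := by
      by_contra h
      exact hW' (encounters_of_instSubCount_ne_zero _ _ h)
    have h := sq_le_of_forall_encounters_zimin (W := W) hM (by omega)
    rw [hW, hC, show c + 2 * M - M + 1 = c + M + 1 by omega] at h
    have : (c + M + 1) ^ 2 ≤ c * (c + 2 * M + 1) := h.trans_eq (by ring)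
    nlinarith

theorem length_le_of_forall_encounters {Γ α : Type*} [Inhabited α] {V : List Γ} {M : ℕ}
    (hM : ∀ W : List α, W.length = M → Encounters V W) : V.length ≤ M := by
  simpa using (hM (replicate M default) length_replicate).length_le

theorem forall_encounters_zimin_fZ (n q : ℕ) :
    ∀ W : List (Fin q), W.length = fZ n q → Encounters (Zimin n) W :=
  Nat.sInf_mem (exists_forall_encounters_zimin (Fin q) n)

theorem one_div_sub_le_of_sq_le {D L M C : ℝ} (hD : 1 ≤ D) (hL : 0 < L) (hM : 0 ≤ M)
    (h : (L + 1 - M) ^ 2 ≤ D * ((2 * M + 1) * (L + 1) + 2 * C)) :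
    1 / D - (4 * M + 1) / L ≤ 2 * C / (L * (L + 1)) := by
  have key : (L - D * (4 * M + 1)) * (L + 1) ≤ 2 * C * D := by
    nlinarith [mul_nonneg (mul_nonneg hM (sub_nonneg.2 hD)) (by linarith : 0 ≤ L + 1),
      sq_nonneg M]
  rw [div_sub_div _ _ (by positivity) hL.ne', div_le_div_iff₀ (by positivity) (by positivity)]
  nlinarith [mul_le_mul_of_nonneg_left key hL.le]

theorem Filter.le_liminf_comap_of_sub_div_le {X : Type*} {ℓ : X → ℕ} [(comap ℓ atTop).NeBot]
    {u : X → ℝ} {c k B : ℝ} (hB : ∀ᶠ x in comap ℓ atTop, u x ≤ B)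
    (h : ∀ᶠ x in comap ℓ atTop, c - k / ℓ x ≤ u x) :
    c ≤ liminf u (comap ℓ atTop) := by
  have hlim : Tendsto (fun x => c - k / ℓ x) (comap ℓ atTop) (nhds c) := by
    simpa using
      tendsto_const_nhds.sub ((tendsto_const_div_atTop_nhds_zero_nat k).comp tendsto_comap)
  calc c = liminf (fun x => c - k / ℓ x) (comap ℓ atTop) := hlim.liminf_eq.symm
    _ ≤ _ :=
      liminf_le_liminf h hlim.isBoundedUnder_ge (isCoboundedUnder_ge_of_eventually_le _ hB)

theorem one_div_sub_le_instDensity_zimin_succ {n q : ℕ} (hq : 2 ≤ q) {W : List (Fin q)}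
    (hW : fZ n q ≤ W.length) (hW1 : 1 ≤ W.length) :
    1 / (((fZ n q : ℝ) - 2 ^ n + 2) ^ 2 * (q : ℝ) ^ (fZ n q + 1))
      - (4 * (fZ n q : ℝ) + 1) / W.length ≤ instDensity (Zimin (n + 1)) W := by
  set f := fZ n q
  have : Inhabited (Fin q) := ⟨⟨0, by omega⟩⟩
  have hf : 2 ^ n ≤ f + 1 := by
    have := length_le_of_forall_encounters (forall_encounters_zimin_fZ n q)
    rw [length_zimin] at this
    have := Nat.one_le_two_pow (n := n)
    omega
  have hnat : (W.length - f + 1) ^ 2 ≤ (f + 2 - 2 ^ n) ^ 2 * q ^ (f + 1) *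
      ((2 * f + 1) * (W.length + 1) + 2 * instSubCount (Zimin (n + 1)) W) := by
    refine (sq_le_of_forall_encounters_zimin (forall_encounters_zimin_fZ n q) hW).trans ?_
    rw [Fintype.card_fin]
    gcongr
    exact (Nat.geomSum_lt hq fun k hk => Finset.mem_range.1 hk).le
  have hreal : ((W.length : ℝ) + 1 - f) ^ 2 ≤
      (((f : ℝ) - 2 ^ n + 2) ^ 2 * (q : ℝ) ^ (f + 1)) *
        ((2 * f + 1) * (W.length + 1) + 2 * instSubCount (Zimin (n + 1)) W) := by
    have := (Nat.cast_le (α := ℝ)).2 hnat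
    push_cast [Nat.cast_sub hW, Nat.cast_sub (show 2 ^ n ≤ f + 2 by omega)] at this
    exact (le_of_eq (by ring)).trans (this.trans_eq (by ring))
  have hD : 1 ≤ ((f : ℝ) - 2 ^ n + 2) ^ 2 * (q : ℝ) ^ (f + 1) := by
    have : (2 : ℝ) ^ n ≤ f + 1 := by exact_mod_cast hf
    refine one_le_mul_of_one_le_of_one_le (one_le_pow₀ (by linarith)) (one_le_pow₀ ?_)
    exact_mod_cast (by omega : 1 ≤ q)
  rw [instDensity_eq]
  exact one_div_sub_le_of_sq_le hD (by positivity) (by positivity) hreal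

theorem stmt9_general (n q : ℕ) (hq : 2 ≤ q) :
    1 / (((fZ n q : ℝ) - 2 ^ n + 2) ^ 2 * (q : ℝ) ^ (fZ n q + 1)) ≤
      liminfDensity (Zimin (n + 1)) q := by
  have : (comap (length : List (Fin q) → ℕ) atTop).NeBot := comap_neBot fun t ht =>
    let ⟨N, hN⟩ := mem_atTop_sets.1 ht
    ⟨replicate N ⟨0, by omega⟩, by simpa using hN N le_rfl⟩
  refine le_liminf_comap_of_sub_div_le (k := 4 * fZ n q + 1) (B := 4) ?_ ?_
  · filter_upwards [tendsto_comap.eventually (eventually_ge_atTop 1)] with W hW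
    exact instDensity_le_four _ W hW
  · filter_upwards [tendsto_comap.eventually (eventually_ge_atTop (max (fZ n q) 1))] with W hW
    exact one_div_sub_le_instDensity_zimin_succ hq (le_of_max_le_left hW) (le_of_max_le_right hW)

theorem stmt9 (n q : ℕ) (hn : 1 ≤ n) (hq : 2 ≤ q) :
    1 / (((fZ n q : ℝ) - 2 ^ n + 2) ^ 2 * (q : ℝ) ^ (fZ n q + 1)) ≤
      liminfDensity (Zimin (n + 1)) q :=
  stmt9_general n q hq
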